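/- Let X = (X_1,…,X_n) and Y = (Y_1,…,Y_n) be random vectors in ℝ^n with X_i equal in distribution to Y_i for each i = 1,…,n. If X ≤_wcs Y, then X ≤_sm Y, i.e. Ef(X) ≤ Ef(Y) for every bounded measurable supermodular function f : ℝ^n → ℝ. -/

import Mathlib

open MeasureTheory ProbabilityTheory

/-- `f` depends only on the coordinates in `A`. -/
def DepOn {n : ℕ} (f : (Fin n → ℝ) → ℝ) (A : Set (Fin n)) : Prop :=
  ∀ x y : Fin n → ℝ, (∀ i ∈ A, x i = y i) → f x = f y

/-- `f` is bounded. -/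
def IsBdd {α : Type*} (f : α → ℝ) : Prop :=
  ∃ C : ℝ, ∀ x, |f x| ≤ C

/-- The covariance `Cov(1{X_i > t}, f(X))`. -/
noncomputable def covInd {Ω : Type*} [MeasurableSpace Ω] (μ : Measure Ω) {n : ℕ}
    (X : Ω → Fin n → ℝ) (i : Fin n) (t : ℝ) (f : (Fin n → ℝ) → ℝ) : ℝ :=
  (∫ ω, (if t < X ω i then (1 : ℝ) else 0) * f (X ω) ∂μ) -
    (μ {ω | t < X ω i}).toReal * ∫ ω, f (X ω) ∂μ

/-- `X ≤_wcs Y`: weakly conditional increasing in sequence order, i.e.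
`Cov(1{X_i > t}, f(X_{i+1}, …, X_n)) ≤ Cov(1{Y_i > t}, f(Y_{i+1}, …, Y_n))`
for all `i = 1, …, n-1`, all `t ∈ ℝ`, and all bounded measurable `f` nondecreasing in each
coordinate (depending only on the coordinates after `i`). -/
def WCSle {Ω₁ Ω₂ : Type*} [MeasurableSpace Ω₁] [MeasurableSpace Ω₂]
    (μ₁ : Measure Ω₁) (μ₂ : Measure Ω₂) {n : ℕ}
    (X : Ω₁ → Fin n → ℝ) (Y : Ω₂ → Fin n → ℝ) : Prop :=
  ∀ (i : Fin n) (t : ℝ) (f : (Fin n → ℝ) → ℝ), (i : ℕ) + 1 < n →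
    Measurable f → Monotone f → IsBdd f → DepOn f {j | i < j} →
    covInd μ₁ X i t f ≤ covInd μ₂ Y i t f

/-- `f : ℝⁿ → ℝ` is supermodular: `Δ_i^ε Δ_j^δ f(x) ≥ 0` for all `x`, all `i < j` and all
`ε, δ > 0`, where `Δ_i^ε f(x) = f(x + ε e_i) - f(x)`. -/
def Supermodular {n : ℕ} (f : (Fin n → ℝ) → ℝ) : Prop :=
  ∀ (x : Fin n → ℝ) (i j : Fin n) (ε δ : ℝ), i < j → 0 < ε → 0 < δ →
    0 ≤ f (x + ε • (Pi.single i 1 : Fin n → ℝ) + δ • (Pi.single j 1 : Fin n → ℝ)) - f (x + δ • (Pi.single j 1 : Fin n → ℝ)) -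
      (f (x + ε • (Pi.single i 1 : Fin n → ℝ)) - f x)

/-!
Induction on `n`, splitting off the first coordinate. Let `m` be the common law of `X 0` and
`Y 0` and `g z = ∫ f (u, z) dm(u)`. Then `g` is again bounded, measurable and supermodular, and
the tails inherit equal marginals and `≤_wcs`, so `E g(tail X) ≤ E g(tail Y)` by induction.

The remaining gap `E f(X) - E g(tail X)` is `∫ φ dP - ∫ φ dQ` for `φ (u, z) = f (u, z)`, the joint
law `P` of `(X 0, tail X)` and the product `Q = m ⊗ law(tail X)`; supermodularity says that `φ`
has increasing differences. Rounding `u` up to a finite grid `s 0 ≤ … ≤ s N` telescopes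
`φ (⌈u⌉, z) - φ (s 0, z)` into `∑ₖ 1{s k < u} (φ (s (k+1), z) - φ (s k, z))`, and the gap of each
summand is `Cov(1{X 0 > s k}, Dₖ(tail X))` with `Dₖ` nondecreasing, which is where `≤_wcs`
enters. Finally `φ (·, z) - φ (·, 0)` is a difference of monotone functions, continuous off a
countable set that can be chosen independently of `z`; grids that eventually contain this set
and become dense make the rounded integrands converge, and dominated convergence concludes.
-/

open Filter Topology Finset

namespace IsBdd

variable {α β : Type*}

lemma comp {f : β → ℝ} (hf : IsBdd f) (g : α → β) : IsBdd (f ∘ g) :=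
  let ⟨C, hC⟩ := hf; ⟨C, fun x => hC (g x)⟩

lemma sub {f g : α → ℝ} (hf : IsBdd f) (hg : IsBdd g) : IsBdd fun x => f x - g x := by
  obtain ⟨C, hC⟩ := hf
  obtain ⟨D, hD⟩ := hg
  exact ⟨C + D, fun x => (abs_sub _ _).trans (add_le_add (hC x) (hD x))⟩

lemma indicator_mul {f : α → ℝ} (hf : IsBdd f) (p : α → Prop) [DecidablePred p] :
    IsBdd fun x => (if p x then (1 : ℝ) else 0) * f x := by
  obtain ⟨C, hC⟩ := hf
  refine ⟨C, fun x => ?_⟩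
  dsimp only
  split_ifs
  · simpa using hC x
  · simpa using (abs_nonneg _).trans (hC x)

lemma integrable [MeasurableSpace α] {μ : Measure α} [IsFiniteMeasure μ] {f : α → ℝ}
    (hf : IsBdd f) (hm : AEStronglyMeasurable f μ) : Integrable f μ :=
  let ⟨C, hC⟩ := hf; .of_bound hm C (.of_forall hC)

lemma integral_right {γ : Type*} [MeasurableSpace γ] {f : γ × α → ℝ} (hf : IsBdd f)
    (μ : Measure γ) [IsFiniteMeasure μ] : IsBdd fun x => ∫ u, f (u, x) ∂μ := by
  obtain ⟨C, hC⟩ := hf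
  refine ⟨C * μ.real Set.univ, fun x => ?_⟩
  simpa using norm_integral_le_of_norm_le_const (μ := μ) (f := fun u => f (u, x))
    (.of_forall fun u => (Real.norm_eq_abs _).trans_le (hC (u, x)))

end IsBdd

lemma tendsto_integral_of_forall_abs_le {α : Type*} [MeasurableSpace α] {μ : Measure α}
    [IsFiniteMeasure μ] {φ : ℕ → α → ℝ} {ψ : α → ℝ} {C : ℝ}
    (hm : ∀ m, AEStronglyMeasurable (φ m) μ) (hC : ∀ m x, |φ m x| ≤ C)
    (hlim : ∀ x, Tendsto (φ · x) atTop (𝓝 (ψ x))) :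
    Tendsto (fun m => ∫ x, φ m x ∂μ) atTop (𝓝 (∫ x, ψ x ∂μ)) :=
  tendsto_integral_of_dominated_convergence (fun _ => C) hm (integrable_const C)
    (fun m => .of_forall (hC m)) (.of_forall hlim)

lemma monotone_of_le_update {ι α β : Type*} [Fintype ι] [DecidableEq ι] [Preorder α]
    [Preorder β] {F : (ι → α) → β}
    (h : ∀ v j c, v j ≤ c → F v ≤ F (Function.update v j c)) : Monotone F := by
  intro w w' hw
  have key : ∀ S : Finset ι, F w ≤ F (S.piecewise w' w) := by
    intro S
    induction S using Finset.induction_on with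
    | empty => simp
    | insert j S hj ih =>
      rw [Finset.piecewise_insert]
      refine ih.trans (h _ j (w' j) ?_)
      rw [Finset.piecewise_eq_of_notMem _ _ _ hj]
      exact hw j
  simpa using key Finset.univ

lemma measurable_finCons {n : ℕ} :
    Measurable fun p : ℝ × (Fin n → ℝ) => (Fin.cons p.1 p.2 : Fin (n + 1) → ℝ) := by
  refine measurable_pi_lambda _ fun k => Fin.cases ?_ (fun l => ?_) k
  · exact measurable_fst
  · exact (measurable_pi_apply l).comp measurable_snd

lemma measurable_finTail {n : ℕ} : Measurable fun v : Fin (n + 1) → ℝ => Fin.tail v :=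
  measurable_pi_lambda _ fun i => measurable_pi_apply i.succ

lemma Measurable.finTail {α : Type*} [MeasurableSpace α] {n : ℕ} {W : α → Fin (n + 1) → ℝ}
    (hW : Measurable W) : Measurable fun ω => Fin.tail (W ω) :=
  measurable_finTail.comp hW

def IncreasingDifferences {α β : Type*} [Preorder α] [Preorder β] (φ : α × β → ℝ) : Prop :=
  ∀ ⦃a b : α⦄, a ≤ b → Monotone fun z => φ (b, z) - φ (a, z)

namespace IncreasingDifferences

section Preorder

variable {α β : Type*} [Preorder α] [Preorder β] {φ : α × β → ℝ}

lemma sub_right (hφ : IncreasingDifferences φ) (z₀ : β) :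
    IncreasingDifferences fun p => φ p - φ (p.1, z₀) := by
  intro a b hab z z' hz
  have := hφ hab hz
  dsimp only at this ⊢
  linarith

lemma monotone_sub_left (hφ : IncreasingDifferences φ) {z z' : β} (hz : z ≤ z') :
    Monotone fun y => φ (y, z') - φ (y, z) := by
  intro a b hab
  have := hφ hab hz
  dsimp only at this ⊢
  linarith

end Preorder

lemma countable_not_continuousAt_sub {β : Type*} [SemilatticeInf β] {φ : ℝ × β → ℝ}
    (hφ : IncreasingDifferences φ) (z z' : β) :
    {x | ¬ContinuousAt (fun y => φ (y, z) - φ (y, z')) x}.Countable := by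
  refine ((hφ.monotone_sub_left (inf_le_left : z ⊓ z' ≤ z)).countable_not_continuousAt.union
    (hφ.monotone_sub_left (inf_le_right : z ⊓ z' ≤ z')).countable_not_continuousAt).mono ?_
  intro x hx
  contrapose! hx
  simp only [Set.mem_union, Set.mem_ofPred_eq, not_or, not_not] at hx ⊢
  convert hx.1.sub hx.2 using 1
  ext y
  simp

/-- On either side of `x`, the increment `φ (y, z) - φ (x, z)` lies between the increments
along `r` and along `R`. -/
lemma continuousAt_of_le_of_le {β : Type*} [Preorder β] {φ : ℝ × β → ℝ}
    (hφ : IncreasingDifferences φ) {r z R : β} (hr : r ≤ z) (hR : z ≤ R) {x : ℝ}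
    (hcr : ContinuousAt (fun y => φ (y, r)) x) (hcR : ContinuousAt (fun y => φ (y, R)) x) :
    ContinuousAt (fun y => φ (y, z)) x := by
  have hr0 : Tendsto (fun y => φ (y, r) - φ (x, r)) (𝓝 x) (𝓝 0) := by
    simpa using hcr.tendsto.sub_const (φ (x, r))
  have hR0 : Tendsto (fun y => φ (y, R) - φ (x, R)) (𝓝 x) (𝓝 0) := by
    simpa using hcR.tendsto.sub_const (φ (x, R))
  have hbounds : ∀ y, min (φ (y, r) - φ (x, r)) (φ (y, R) - φ (x, R)) ≤ φ (y, z) - φ (x, z) ∧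
      φ (y, z) - φ (x, z) ≤ max (φ (y, r) - φ (x, r)) (φ (y, R) - φ (x, R)) := by
    intro y
    rcases le_total x y with hxy | hyx
    · have h₁ := hφ hxy hr
      have h₂ := hφ hxy hR
      dsimp only at h₁ h₂
      constructor
      · exact (min_le_left _ _).trans (by linarith)
      · exact (by linarith : _ ≤ _).trans (le_max_right _ _)
    · have h₁ := hφ hyx hr
      have h₂ := hφ hyx hR
      dsimp only at h₁ h₂
      constructor
      · exact (min_le_right _ _).trans (by linarith)
      · exact (by linarith : _ ≤ _).trans (le_max_left _ _)
  have hz0 : Tendsto (fun y => φ (y, z) - φ (x, z)) (𝓝 x) (𝓝 0) := by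
    refine tendsto_of_tendsto_of_tendsto_of_le_of_le ?_ ?_ (fun y => (hbounds y).1)
      (fun y => (hbounds y).2)
    · simpa using hr0.min hR0
    · simpa using hr0.max hR0
  simpa [ContinuousAt] using hz0.add_const (φ (x, z))

end IncreasingDifferences

lemma Finset.eq_range_card_of_isLowerSet {S : Finset ℕ} (hS : IsLowerSet (S : Set ℕ)) :
    S = range #S := by
  have hsub : S ⊆ range #S := fun k hk => by
    have : range (k + 1) ⊆ S := fun l hl => hS (Nat.lt_succ_iff.1 (mem_range.1 hl)) hk
    simpa using card_le_card this
  exact eq_of_subset_of_card_le hsub (by simp)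

section Grid

variable (s : ℕ → ℝ) (N : ℕ)

noncomputable def gridIndex (x : ℝ) : ℕ := #{k ∈ range N | s k < x}

/-- For monotone `s`: the smallest of `s 0, …, s N` that is `≥ x`, and `s N` if there is none. -/
noncomputable def gridCeil (x : ℝ) : ℝ := s (gridIndex s N x)

variable {s N}

lemma filter_lt_eq_range_gridIndex (hs : Monotone s) (x : ℝ) :
    {k ∈ range N | s k < x} = range (gridIndex s N x) :=
  Finset.eq_range_card_of_isLowerSet fun k l hlk hk => by
    rw [coe_filter, Set.mem_ofPred_eq, mem_range] at hk ⊢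
    exact ⟨hlk.trans_lt hk.1, (hs hlk).trans_lt hk.2⟩

lemma gridIndex_le (x : ℝ) : gridIndex s N x ≤ N :=
  (card_filter_le _ _).trans_eq (card_range N)

lemma monotone_gridCeil (hs : Monotone s) : Monotone (gridCeil s N) :=
  fun _ _ hxy => hs <| card_le_card fun k hk => by
    rw [mem_filter] at hk ⊢
    exact ⟨hk.1, hk.2.trans_le hxy⟩

lemma sum_indicator_mul_sub_eq_gridCeil (hs : Monotone s) (g : ℝ → ℝ) (x : ℝ) :
    ∑ k ∈ range N, (if s k < x then (1 : ℝ) else 0) * (g (s (k + 1)) - g (s k)) =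
      g (gridCeil s N x) - g (s 0) := by
  simp_rw [ite_mul, one_mul, zero_mul]
  rw [← sum_filter, filter_lt_eq_range_gridIndex hs, sum_range_sub (fun k => g (s k))]
  rfl

lemma le_gridCeil_le (hs : Monotone s) {j : ℕ} (hj : j ≤ N) {x : ℝ} (hx : x ≤ s j) :
    x ≤ gridCeil s N x ∧ gridCeil s N x ≤ s j := by
  have hcj : gridIndex s N x ≤ j := by
    refine (card_le_card fun k hk => ?_).trans_eq (card_range j)
    rw [mem_filter] at hk
    exact mem_range.2 (hs.reflect_lt (hk.2.trans_le hx))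
  refine ⟨?_, hs hcj⟩
  rcases (gridIndex_le x).lt_or_eq with hlt | heq
  · have hnot : gridIndex s N x ∉ range (gridIndex s N x) := by simp
    rw [← filter_lt_eq_range_gridIndex hs, mem_filter, not_and] at hnot
    exact not_lt.1 (hnot (mem_range.2 hlt))
  · rwa [gridCeil, show gridIndex s N x = j by omega]

end Grid

lemma Finset.exists_monotone_seq_mem (T : Finset ℝ) :
    ∃ (s : ℕ → ℝ) (N : ℕ), Monotone s ∧ ∀ t ∈ T, ∃ j ≤ N, s j = t := by
  rcases T.eq_empty_or_nonempty with rfl | hT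
  · exact ⟨0, 0, monotone_const, by simp⟩
  obtain ⟨N, hN⟩ := Nat.exists_eq_add_one.2 hT.card_pos
  refine ⟨fun k => T.orderEmbOfFin hN ⟨min k N, by omega⟩, N,
    fun a b hab => (T.orderEmbOfFin hN).monotone (Fin.mk_le_mk.2 (min_le_min_right N hab)),
    fun t ht => ?_⟩
  rw [← mem_coe, ← T.range_orderEmbOfFin hN] at ht
  obtain ⟨i, rfl⟩ := ht
  exact ⟨i, Nat.lt_succ_iff.1 i.2, by simp [min_eq_left (Nat.lt_succ_iff.1 i.2)]⟩

lemma exists_gridCeil_tendsto {D : Set ℝ} (hD : D.Countable) :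
    ∃ (s : ℕ → ℕ → ℝ) (N : ℕ → ℕ), (∀ m, Monotone (s m)) ∧ ∀ x,
      (x ∈ D → ∀ᶠ m in atTop, gridCeil (s m) (N m) x = x) ∧
      Tendsto (fun m => gridCeil (s m) (N m) x) atTop (𝓝 x) := by
  obtain ⟨e, he⟩ := (hD.union (Set.countable_range ((↑) : ℚ → ℝ))).exists_eq_range
    ⟨0, Or.inr ⟨0, Rat.cast_zero⟩⟩
  choose s N hs hmem using fun m : ℕ => ((range (m + 1)).image e).exists_monotone_seq_mem
  have hev : ∀ y ∈ D ∪ Set.range ((↑) : ℚ → ℝ), ∀ᶠ m in atTop, ∃ j ≤ N m, s m j = y := by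
    intro y hy
    obtain ⟨k, rfl⟩ := he ▸ hy
    filter_upwards [eventually_ge_atTop k] with m hm
    exact hmem m _ (mem_image_of_mem e (mem_range.2 (Nat.lt_succ_of_le hm)))
  have hsqueeze : ∀ (x : ℝ) (q : ℚ), x ≤ q →
      ∀ᶠ m in atTop, x ≤ gridCeil (s m) (N m) x ∧ gridCeil (s m) (N m) x ≤ q := by
    intro x q hxq
    filter_upwards [hev q (Or.inr ⟨q, rfl⟩)] with m ⟨j, hj, hsj⟩
    exact hsj ▸ le_gridCeil_le (hs m) hj (hsj ▸ hxq)
  refine ⟨s, N, hs, fun x => ⟨fun hx => ?_, tendsto_order.2 ⟨fun a ha => ?_, fun b hb => ?_⟩⟩⟩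
  · filter_upwards [hev x (Or.inl hx)] with m ⟨j, hj, hsj⟩
    have := le_gridCeil_le (hs m) hj hsj.ge
    exact le_antisymm (hsj ▸ this.2) this.1
  · obtain ⟨q, hq⟩ := exists_rat_gt x
    filter_upwards [hsqueeze x q hq.le] with m hm
    exact ha.trans_le hm.1
  · obtain ⟨q, hxq, hqb⟩ := exists_rat_btwn hb
    filter_upwards [hsqueeze x q hxq.le] with m hm
    exact hm.2.trans_lt hqb

lemma IncreasingDifferences.exists_gridCeil_tendsto {ι : Type*} [Finite ι]
    {φ : ℝ × (ι → ℝ) → ℝ} (hφ : IncreasingDifferences φ) :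
    ∃ (s : ℕ → ℕ → ℝ) (N : ℕ → ℕ), (∀ m, Monotone (s m)) ∧ ∀ u z,
      Tendsto (fun m => φ (gridCeil (s m) (N m) u, z) - φ (gridCeil (s m) (N m) u, 0)) atTop
        (𝓝 (φ (u, z) - φ (u, 0))) := by
  set B := ⋃ r : ι → ℚ, {x | ¬ContinuousAt (fun y => φ (y, fun i => (r i : ℝ)) - φ (y, 0)) x}
  obtain ⟨s, N, hs, hlim⟩ := _root_.exists_gridCeil_tendsto <|
    Set.countable_iUnion fun r : ι → ℚ => hφ.countable_not_continuousAt_sub (fun i => (r i : ℝ)) 0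
  refine ⟨s, N, hs, fun u z => ?_⟩
  by_cases hu : u ∈ B
  · exact tendsto_const_nhds.congr' <| ((hlim u).1 hu).mono fun m hm => by simp only [hm]
  · have hcont (r : ι → ℚ) : ContinuousAt (fun y => φ (y, fun i => (r i : ℝ)) - φ (y, 0)) u :=
      not_not.1 fun h => hu (Set.mem_iUnion.2 ⟨r, h⟩)
    choose r hr using fun i => exists_rat_lt (z i)
    choose R hR using fun i => exists_rat_gt (z i)
    -- off `B`, `φ (·, z) - φ (·, 0)` is continuous at `u`: squeeze `z` between rational vectors
    exact ((hφ.sub_right 0).continuousAt_of_le_of_le (fun i => (hr i).le) (fun i => (hR i).le)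
      (hcont r) (hcont R)).tendsto.comp (hlim u).2

section IntegralGap

variable {α : Type*} [MeasurableSpace α]

noncomputable def integralGap (P Q : Measure α) (φ : α → ℝ) : ℝ :=
  ∫ x, φ x ∂P - ∫ x, φ x ∂Q

variable {P Q : Measure α} [IsFiniteMeasure P] [IsFiniteMeasure Q]

lemma integralGap_sub {φ ψ : α → ℝ} (hφm : Measurable φ) (hφ : IsBdd φ) (hψm : Measurable ψ)
    (hψ : IsBdd ψ) :
    integralGap P Q (fun x => φ x - ψ x) = integralGap P Q φ - integralGap P Q ψ := by
  have hφi (μ : Measure α) [IsFiniteMeasure μ] := hφ.integrable (μ := μ) hφm.aestronglyMeasurable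
  have hψi (μ : Measure α) [IsFiniteMeasure μ] := hψ.integrable (μ := μ) hψm.aestronglyMeasurable
  simp only [integralGap]
  rw [integral_sub (hφi P) (hψi P), integral_sub (hφi Q) (hψi Q)]
  ring

lemma integralGap_finset_sum {ι : Type*} (S : Finset ι) {φ : ι → α → ℝ}
    (hm : ∀ i, Measurable (φ i)) (hb : ∀ i, IsBdd (φ i)) :
    integralGap P Q (fun x => ∑ i ∈ S, φ i x) = ∑ i ∈ S, integralGap P Q (φ i) := by
  simp only [integralGap]
  rw [integral_finsetSum S fun i _ => (hb i).integrable (hm i).aestronglyMeasurable,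
    integral_finsetSum S fun i _ => (hb i).integrable (hm i).aestronglyMeasurable,
    sum_sub_distrib]

lemma tendsto_integralGap {φ : ℕ → α → ℝ} {ψ : α → ℝ} {C : ℝ} (hm : ∀ m, Measurable (φ m))
    (hC : ∀ m x, |φ m x| ≤ C) (hlim : ∀ x, Tendsto (φ · x) atTop (𝓝 (ψ x))) :
    Tendsto (fun m => integralGap P Q (φ m)) atTop (𝓝 (integralGap P Q ψ)) :=
  (tendsto_integral_of_forall_abs_le (fun m => (hm m).aestronglyMeasurable) hC hlim).sub
    (tendsto_integral_of_forall_abs_le (fun m => (hm m).aestronglyMeasurable) hC hlim)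

end IntegralGap

section ProductSpace

variable {β γ : Type*} [MeasurableSpace β] [MeasurableSpace γ] {P Q : Measure (β × γ)}

lemma integralGap_comp_fst (h : P.fst = Q.fst) {a : β → ℝ} (ha : Measurable a) :
    integralGap P Q (fun p => a p.1) = 0 := by
  rw [integralGap, sub_eq_zero,
    ← integral_map measurable_fst.aemeasurable ha.aestronglyMeasurable,
    ← integral_map measurable_fst.aemeasurable ha.aestronglyMeasurable]
  exact congrArg (fun ρ => ∫ x, a x ∂ρ) h

lemma integralGap_comp_snd (h : P.snd = Q.snd) {b : γ → ℝ} (hb : Measurable b) :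
    integralGap P Q (fun p => b p.2) = 0 := by
  rw [integralGap, sub_eq_zero,
    ← integral_map measurable_snd.aemeasurable hb.aestronglyMeasurable,
    ← integral_map measurable_snd.aemeasurable hb.aestronglyMeasurable]
  exact congrArg (fun ρ => ∫ x, b x ∂ρ) h

lemma measurable_indicator_mul {D : γ → ℝ} (hD : Measurable D) (t : ℝ) :
    Measurable fun p : ℝ × γ => (if t < p.1 then (1 : ℝ) else 0) * D p.2 :=
  (Measurable.ite (measurableSet_lt measurable_const measurable_fst) measurable_const
    measurable_const).mul (hD.comp measurable_snd)

end ProductSpace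

section Comparison

variable {E : Type*} [MeasurableSpace E] [Preorder E] {P₁ Q₁ P₂ Q₂ : Measure (ℝ × E)}
  [IsFiniteMeasure P₁] [IsFiniteMeasure Q₁] [IsFiniteMeasure P₂] [IsFiniteMeasure Q₂]

/-- Along a grid, `φ (gridCeil s N u, z) - φ (s 0, z)` telescopes into a sum of terms
`1{s k < u} * D_k z` with `D_k = φ (s (k + 1), ·) - φ (s k, ·)` monotone. -/
lemma integralGap_gridCeil_le (hsnd₁ : P₁.snd = Q₁.snd) (hsnd₂ : P₂.snd = Q₂.snd)
    (hcov : ∀ (t : ℝ) (D : E → ℝ), Measurable D → Monotone D → IsBdd D →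
      integralGap P₁ Q₁ (fun p => (if t < p.1 then 1 else 0) * D p.2) ≤
        integralGap P₂ Q₂ (fun p => (if t < p.1 then 1 else 0) * D p.2))
    {φ : ℝ × E → ℝ} (hφ : IncreasingDifferences φ) (hφm : Measurable φ) (hφb : IsBdd φ)
    {s : ℕ → ℝ} (hs : Monotone s) (N : ℕ) :
    integralGap P₁ Q₁ (fun p => φ (gridCeil s N p.1, p.2)) ≤
      integralGap P₂ Q₂ (fun p => φ (gridCeil s N p.1, p.2)) := by
  set D : ℕ → E → ℝ := fun k z => φ (s (k + 1), z) - φ (s k, z)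
  have hφm' (u : ℝ) : Measurable fun z => φ (u, z) := hφm.comp measurable_prodMk_left
  have hDm (k : ℕ) : Measurable (D k) := (hφm' _).sub (hφm' _)
  have hDb (k : ℕ) : IsBdd (D k) := (hφb.comp _).sub (hφb.comp _)
  have hγm : Measurable fun p : ℝ × E => φ (gridCeil s N p.1, p.2) :=
    hφm.comp (((monotone_gridCeil hs).measurable.comp measurable_fst).prodMk measurable_snd)
  have hsplit (P Q : Measure (ℝ × E)) [IsFiniteMeasure P] [IsFiniteMeasure Q]
      (h : P.snd = Q.snd) : integralGap P Q (fun p => φ (gridCeil s N p.1, p.2)) =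
        ∑ k ∈ range N, integralGap P Q (fun p => (if s k < p.1 then 1 else 0) * D k p.2) := by
    have hsub := integralGap_sub (P := P) (Q := Q) (ψ := fun p => φ (s 0, p.2)) hγm
      (hφb.comp _) ((hφm' (s 0)).comp measurable_snd) (hφb.comp fun p : ℝ × E => (s 0, p.2))
    rw [integralGap_comp_snd h (hφm' (s 0)), sub_zero] at hsub
    rw [← hsub, ← integralGap_finset_sum _ (fun k => measurable_indicator_mul (hDm k) _)
      (fun k => ((hDb k).comp Prod.snd).indicator_mul _)]
    congr 1
    funext p
    exact (sum_indicator_mul_sub_eq_gridCeil hs (fun u => φ (u, p.2)) p.1).symm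
  rw [hsplit P₁ Q₁ hsnd₁, hsplit P₂ Q₂ hsnd₂]
  exact sum_le_sum fun k _ => hcov (s k) (D k) (hDm k) (hφ (hs k.le_succ)) (hDb k)

theorem integralGap_le_of_increasingDifferences {ι : Type*} [Finite ι]
    {P₁ Q₁ P₂ Q₂ : Measure (ℝ × (ι → ℝ))}
    [IsFiniteMeasure P₁] [IsFiniteMeasure Q₁] [IsFiniteMeasure P₂] [IsFiniteMeasure Q₂]
    (hfst₁ : P₁.fst = Q₁.fst) (hsnd₁ : P₁.snd = Q₁.snd)
    (hfst₂ : P₂.fst = Q₂.fst) (hsnd₂ : P₂.snd = Q₂.snd)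
    (hcov : ∀ (t : ℝ) (D : (ι → ℝ) → ℝ), Measurable D → Monotone D → IsBdd D →
      integralGap P₁ Q₁ (fun p => (if t < p.1 then 1 else 0) * D p.2) ≤
        integralGap P₂ Q₂ (fun p => (if t < p.1 then 1 else 0) * D p.2))
    {φ : ℝ × (ι → ℝ) → ℝ} (hφ : IncreasingDifferences φ) (hφm : Measurable φ)
    (hφb : IsBdd φ) :
    integralGap P₁ Q₁ φ ≤ integralGap P₂ Q₂ φ := by
  set H : ℝ × (ι → ℝ) → ℝ := fun p => φ p - φ (p.1, 0) with hH
  have hφ0m : Measurable fun u => φ (u, 0) := hφm.comp measurable_prodMk_right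
  have hHm : Measurable H := hφm.sub (hφ0m.comp measurable_fst)
  obtain ⟨C, hC⟩ : IsBdd H := hφb.sub (hφb.comp fun p : ℝ × (ι → ℝ) => (p.1, 0))
  have hgap (P Q : Measure (ℝ × (ι → ℝ))) [IsFiniteMeasure P] [IsFiniteMeasure Q]
      (h : P.fst = Q.fst) : integralGap P Q φ = integralGap P Q H := by
    rw [hH, integralGap_sub (ψ := fun p : ℝ × (ι → ℝ) => φ (p.1, 0)) hφm hφb
      (hφ0m.comp measurable_fst) (hφb.comp fun p : ℝ × (ι → ℝ) => (p.1, 0)),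
      integralGap_comp_fst h hφ0m, sub_zero]
  obtain ⟨s, N, hs, hlim⟩ := hφ.exists_gridCeil_tendsto
  have hγm (m : ℕ) : Measurable fun p : ℝ × (ι → ℝ) => H (gridCeil (s m) (N m) p.1, p.2) :=
    hHm.comp (((monotone_gridCeil (hs m)).measurable.comp measurable_fst).prodMk measurable_snd)
  rw [hgap P₁ Q₁ hfst₁, hgap P₂ Q₂ hfst₂]
  have hconv (P Q : Measure (ℝ × (ι → ℝ))) [IsFiniteMeasure P] [IsFiniteMeasure Q] :=
    tendsto_integralGap (P := P) (Q := Q) hγm (fun _ _ => hC _) fun p => hlim p.1 p.2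
  exact le_of_tendsto_of_tendsto' (hconv P₁ Q₁) (hconv P₂ Q₂) fun m =>
    integralGap_gridCeil_le hsnd₁ hsnd₂ hcov (hφ.sub_right 0) hHm ⟨C, hC⟩ (hs m) (N m)

end Comparison

lemma add_smul_single_eq_update {ι : Type*} [DecidableEq ι] (z : ι → ℝ) (j : ι) (δ : ℝ) :
    z + δ • (Pi.single j 1 : ι → ℝ) = Function.update z j (z j + δ) := by
  funext k
  by_cases h : k = j
  · subst h; simp
  · simp [Function.update, h]

lemma Fin.cons_add_smul_single_zero {n : ℕ} (a ε : ℝ) (z : Fin n → ℝ) :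
    (Fin.cons a z : Fin (n + 1) → ℝ) + ε • (Pi.single 0 1 : Fin (n + 1) → ℝ) =
      Fin.cons (a + ε) z := by
  funext k
  cases k using Fin.cases <;> simp

lemma Fin.cons_add_smul_single_succ {n : ℕ} (a δ : ℝ) (z : Fin n → ℝ) (j : Fin n) :
    (Fin.cons a z : Fin (n + 1) → ℝ) + δ • (Pi.single j.succ 1 : Fin (n + 1) → ℝ) =
      Fin.cons a (z + δ • (Pi.single j 1 : Fin n → ℝ)) := by
  funext k
  refine Fin.cases ?_ (fun l => ?_) k
  · simp
  · by_cases h : l = j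
    · subst h; simp
    · simp [Pi.single_eq_of_ne h, Pi.single_eq_of_ne (Fin.succ_injective _ |>.ne h)]

namespace Supermodular

variable {n : ℕ} {f : (Fin (n + 1) → ℝ) → ℝ}

lemma increasingDifferences_finCons (hf : Supermodular f) :
    IncreasingDifferences fun p : ℝ × (Fin n → ℝ) => f (Fin.cons p.1 p.2) := by
  intro a b hab
  refine monotone_of_le_update fun v j c hc => ?_
  rcases hab.eq_or_lt with rfl | hab
  · simp
  rcases hc.eq_or_lt with rfl | hc
  · simp
  have H := hf (Fin.cons a v) 0 j.succ (b - a) (c - v j) (Fin.succ_pos j) (sub_pos.2 hab)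
    (sub_pos.2 hc)
  rw [Fin.cons_add_smul_single_zero, Fin.cons_add_smul_single_succ,
    Fin.cons_add_smul_single_succ, add_smul_single_eq_update, add_sub_cancel,
    add_sub_cancel] at H
  dsimp only
  linarith

lemma integral_finCons (hf : Supermodular f) (hfm : Measurable f) (hfb : IsBdd f)
    (m : Measure ℝ) [IsFiniteMeasure m] :
    Supermodular fun z : Fin n → ℝ => ∫ u, f (Fin.cons u z) ∂m := by
  intro z i j ε δ hij hε hδ
  have hint (w : Fin n → ℝ) : Integrable (fun u => f (Fin.cons u w)) m :=
    (hfb.comp _).integrable <|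
      (hfm.comp (measurable_finCons.comp measurable_prodMk_right)).aestronglyMeasurable
  have hpt (u : ℝ) := hf (Fin.cons u z) i.succ j.succ ε δ (Fin.succ_lt_succ_iff.2 hij) hε hδ
  simp only [Fin.cons_add_smul_single_succ] at hpt
  dsimp only
  rw [← integral_sub (hint _) (hint _), ← integral_sub (hint _) (hint _), sub_nonneg]
  exact integral_mono ((hint _).sub (hint _)) ((hint _).sub (hint _)) fun u => sub_nonneg.1 (hpt u)

end Supermodular

lemma integral_indicator_lt {Ω : Type*} [MeasurableSpace Ω] (μ : Measure Ω) [IsFiniteMeasure μ]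
    {g : Ω → ℝ} (hg : Measurable g) (t : ℝ) :
    ∫ ω, (if t < g ω then (1 : ℝ) else 0) ∂μ = (μ {ω | t < g ω}).toReal := by
  have h : (fun ω => if t < g ω then (1 : ℝ) else 0) = {ω | t < g ω}.indicator 1 := by
    funext ω
    simp [Set.indicator_apply]
  rw [h, integral_indicator_one (measurableSet_lt measurable_const hg)]
  rfl

section HeadTail

variable {Ω : Type*} [MeasurableSpace Ω] {n : ℕ}

noncomputable def headTailLaw (μ : Measure Ω) (W : Ω → Fin (n + 1) → ℝ) :
    Measure (ℝ × (Fin n → ℝ)) :=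
  μ.map fun ω => (W ω 0, Fin.tail (W ω))

noncomputable def headTailIndepLaw (μ : Measure Ω) (W : Ω → Fin (n + 1) → ℝ) :
    Measure (ℝ × (Fin n → ℝ)) :=
  (μ.map fun ω => W ω 0).prod (μ.map fun ω => Fin.tail (W ω))

variable {μ : Measure Ω} {W : Ω → Fin (n + 1) → ℝ}

instance [IsFiniteMeasure μ] : IsFiniteMeasure (headTailLaw μ W) := by
  unfold headTailLaw; infer_instance

instance [IsFiniteMeasure μ] : IsFiniteMeasure (headTailIndepLaw μ W) := by
  unfold headTailIndepLaw; infer_instance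

variable [IsProbabilityMeasure μ]

lemma fst_headTailLaw (hW : Measurable W) :
    (headTailLaw μ W).fst = (headTailIndepLaw μ W).fst := by
  have : IsProbabilityMeasure (μ.map fun ω => Fin.tail (W ω)) :=
    Measure.isProbabilityMeasure_map hW.finTail.aemeasurable
  rw [headTailLaw, headTailIndepLaw, Measure.fst_map_prodMk hW.finTail,
    Measure.fst_prod]

lemma snd_headTailLaw (hW : Measurable W) :
    (headTailLaw μ W).snd = (headTailIndepLaw μ W).snd := by
  have : IsProbabilityMeasure (μ.map fun ω => W ω 0) :=
    Measure.isProbabilityMeasure_map (hW.eval (a := 0)).aemeasurable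
  rw [headTailLaw, headTailIndepLaw, Measure.snd_map_prodMk (hW.eval (a := 0)),
    Measure.snd_prod]

lemma integralGap_headTailLaw_finCons (hW : Measurable W) {f : (Fin (n + 1) → ℝ) → ℝ}
    (hfm : Measurable f) (hfb : IsBdd f) :
    integralGap (headTailLaw μ W) (headTailIndepLaw μ W) (fun p => f (Fin.cons p.1 p.2)) =
      ∫ ω, f (W ω) ∂μ -
        ∫ ω, ∫ u, f (Fin.cons u (Fin.tail (W ω))) ∂(μ.map fun ω => W ω 0) ∂μ := by
  have hφm : Measurable fun p : ℝ × (Fin n → ℝ) => f (Fin.cons p.1 p.2) :=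
    hfm.comp measurable_finCons
  rw [integralGap, headTailLaw, headTailIndepLaw,
    integral_map ((hW.eval (a := 0)).prodMk hW.finTail).aemeasurable
      hφm.aestronglyMeasurable,
    integral_prod_symm (fun p : ℝ × (Fin n → ℝ) => f (Fin.cons p.1 p.2))
      ((hfb.comp _).integrable hφm.aestronglyMeasurable),
    integral_map hW.finTail.aemeasurable
      hφm.stronglyMeasurable.integral_prod_left'.aestronglyMeasurable]
  simp only [Fin.cons_self_tail]

lemma integralGap_headTailLaw_indicator_mul (hW : Measurable W) {D : (Fin n → ℝ) → ℝ}
    (hDm : Measurable D) (t : ℝ) :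
    integralGap (headTailLaw μ W) (headTailIndepLaw μ W)
        (fun p => (if t < p.1 then 1 else 0) * D p.2) =
      covInd μ W 0 t fun v => D (Fin.tail v) := by
  have hW0 : Measurable fun ω => W ω 0 := hW.eval
  have hWt := hW.finTail
  have hind : ∫ u, (if t < u then (1 : ℝ) else 0) ∂(μ.map fun ω => W ω 0) =
      (μ {ω | t < W ω 0}).toReal := by
    rw [integral_map hW0.aemeasurable (Measurable.ite measurableSet_Ioi measurable_const
      measurable_const).aestronglyMeasurable, integral_indicator_lt μ hW0]
  rw [integralGap, covInd, headTailLaw, headTailIndepLaw,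
    integral_map (hW0.prodMk hWt).aemeasurable
      (measurable_indicator_mul hDm t).aestronglyMeasurable,
    integral_prod_mul (fun u => if t < u then (1 : ℝ) else 0) D, hind,
    integral_map hWt.aemeasurable hDm.aestronglyMeasurable]

end HeadTail

lemma covInd_const {Ω : Type*} [MeasurableSpace Ω] (μ : Measure Ω) [IsProbabilityMeasure μ]
    {n : ℕ} {W : Ω → Fin n → ℝ} {i : Fin n} (hWi : Measurable fun ω => W ω i) (t c : ℝ) :
    covInd μ W i t (fun _ => c) = 0 := by
  rw [covInd, integral_mul_const, integral_indicator_lt μ hWi, integral_const]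
  simp [mul_comm]

namespace WCSle

variable {Ω₁ Ω₂ : Type*} [MeasurableSpace Ω₁] [MeasurableSpace Ω₂]
  {μ₁ : Measure Ω₁} {μ₂ : Measure Ω₂} {n : ℕ}
  {X : Ω₁ → Fin (n + 1) → ℝ} {Y : Ω₂ → Fin (n + 1) → ℝ}

lemma tail (hwcs : WCSle μ₁ μ₂ X Y) :
    WCSle μ₁ μ₂ (fun ω => Fin.tail (X ω)) (fun ω => Fin.tail (Y ω)) := by
  intro i t f hi hfm hfmono hfb hfdep
  refine hwcs i.succ t (fun v => f (Fin.tail v)) (by simpa using hi)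
    (hfm.comp measurable_finTail) (fun v w hvw => hfmono fun j => hvw j.succ) (hfb.comp _)
    fun x y hxy => hfdep _ _ fun j hj => hxy j.succ (Fin.succ_lt_succ_iff.2 hj)

lemma covInd_zero_le [IsProbabilityMeasure μ₁] [IsProbabilityMeasure μ₂]
    (hwcs : WCSle μ₁ μ₂ X Y) (hX : Measurable X) (hY : Measurable Y)
    {D : (Fin n → ℝ) → ℝ} (hDm : Measurable D) (hDmono : Monotone D) (hDb : IsBdd D) (t : ℝ) :
    covInd μ₁ X 0 t (fun v => D (Fin.tail v)) ≤ covInd μ₂ Y 0 t (fun v => D (Fin.tail v)) := by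
  rcases Nat.eq_zero_or_pos n with rfl | hn
  · have hD (v : Fin 1 → ℝ) : D (Fin.tail v) = D 0 := congrArg D (Subsingleton.elim _ _)
    simp only [hD, covInd_const μ₁ (hX.eval (a := 0)),
      covInd_const μ₂ (hY.eval (a := 0)), le_refl]
  · exact hwcs 0 t _ (by simpa using hn) (hDm.comp measurable_finTail)
      (fun v w hvw => hDmono fun j => hvw j.succ) (hDb.comp _)
      fun x y hxy => congrArg D (funext fun j => hxy j.succ (Fin.succ_pos j))

end WCSle

theorem integral_sub_integral_indep_head_le {Ω₁ Ω₂ : Type*} [MeasurableSpace Ω₁]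
    [MeasurableSpace Ω₂] {μ₁ : Measure Ω₁} {μ₂ : Measure Ω₂} [IsProbabilityMeasure μ₁]
    [IsProbabilityMeasure μ₂] {n : ℕ} {X : Ω₁ → Fin (n + 1) → ℝ} {Y : Ω₂ → Fin (n + 1) → ℝ}
    (hX : Measurable X) (hY : Measurable Y)
    (hmarg : μ₁.map (fun ω => X ω 0) = μ₂.map (fun ω => Y ω 0)) (hwcs : WCSle μ₁ μ₂ X Y)
    {f : (Fin (n + 1) → ℝ) → ℝ} (hfm : Measurable f) (hf : Supermodular f) (hfb : IsBdd f) :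
    ∫ ω, f (X ω) ∂μ₁ - ∫ ω, ∫ u, f (Fin.cons u (Fin.tail (X ω))) ∂(μ₁.map fun ω => X ω 0) ∂μ₁ ≤
      ∫ ω, f (Y ω) ∂μ₂ -
        ∫ ω, ∫ u, f (Fin.cons u (Fin.tail (Y ω))) ∂(μ₁.map fun ω => X ω 0) ∂μ₂ := by
  have hYgap := integralGap_headTailLaw_finCons (μ := μ₂) hY hfm hfb
  rw [← hmarg] at hYgap
  rw [← integralGap_headTailLaw_finCons hX hfm hfb, ← hYgap]
  refine integralGap_le_of_increasingDifferences (fst_headTailLaw hX) (snd_headTailLaw hX)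
    (fst_headTailLaw hY) (snd_headTailLaw hY) (fun t D hDm hDmono hDb => ?_)
    hf.increasingDifferences_finCons (hfm.comp measurable_finCons) (hfb.comp _)
  rw [integralGap_headTailLaw_indicator_mul hX hDm, integralGap_headTailLaw_indicator_mul hY hDm]
  exact hwcs.covInd_zero_le hX hY hDm hDmono hDb t

/-- if `X` and `Y` have equal marginals (`X_i =ᵈ Y_i` for all `i`) and
`X ≤_wcs Y`, then `X ≤_sm Y`: `E f(X) ≤ E f(Y)` for every bounded measurable supermodular
function `f`. -/
theorem stmt10 {Ω₁ Ω₂ : Type*} [MeasurableSpace Ω₁] [MeasurableSpace Ω₂]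
    (μ₁ : Measure Ω₁) (μ₂ : Measure Ω₂)
    [IsProbabilityMeasure μ₁] [IsProbabilityMeasure μ₂] {n : ℕ}
    (X : Ω₁ → Fin n → ℝ) (Y : Ω₂ → Fin n → ℝ)
    (hX : Measurable X) (hY : Measurable Y)
    (hmarg : ∀ i, Measure.map (fun ω => X ω i) μ₁ = Measure.map (fun ω => Y ω i) μ₂)
    (hwcs : WCSle μ₁ μ₂ X Y) :
    ∀ f : (Fin n → ℝ) → ℝ, Measurable f → Supermodular f → IsBdd f →
      ∫ ω, f (X ω) ∂μ₁ ≤ ∫ ω, f (Y ω) ∂μ₂ := by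
  induction n with
  | zero =>
    intro f _ _ _
    have hf (v : Fin 0 → ℝ) : f v = f 0 := congrArg f (Subsingleton.elim _ _)
    simp [hf]
  | succ n ih =>
    intro f hfm hf hfb
    set m := μ₁.map fun ω => X ω 0
    have hhead := integral_sub_integral_indep_head_le hX hY (hmarg 0) hwcs hfm hf hfb
    have htail := ih (fun ω => Fin.tail (X ω)) (fun ω => Fin.tail (Y ω))
      hX.finTail hY.finTail (fun i => hmarg i.succ) hwcs.tail
      (fun z => ∫ u, f (Fin.cons u z) ∂m)
      (hfm.comp measurable_finCons).stronglyMeasurable.integral_prod_left'.measurable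
      (hf.integral_finCons hfm hfb m)
      ((hfb.comp fun p : ℝ × (Fin n → ℝ) => Fin.cons p.1 p.2).integral_right m)
    linarith
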